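/- Every interval valued (∈,∈∨q)-fuzzy implicative filter F of a pseudo BL-algebra A is an interval valued (∈,∈∨q)-fuzzy MV-filter, i.e., μ_F(((y → x) ↪ x) → y) ≥ rmin{μ_F(x → y), [0.5,0.5]} and μ_F(((y ↪ x) → x) ↪ y) ≥ rmin{μ_F(x ↪ y), [0.5,0.5]} for all x, y ∈ A. -/
import Mathlib


noncomputable section

universe u

class PseudoBL (A : Type u) extends Lattice A, BoundedOrder A where
  mul : A → A → A
  rimp : A → A → A
  limp : A → A → A
  mul_assoc : ∀ x y z : A, mul (mul x y) z = mul x (mul y z)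
  mul_top : ∀ x : A, mul x ⊤ = x
  top_mul : ∀ x : A, mul ⊤ x = x
  res_rimp : ∀ x y z : A, mul x y ≤ z ↔ x ≤ rimp y z
  res_limp : ∀ x y z : A, mul x y ≤ z ↔ y ≤ limp x z
  inf_eq_rimp : ∀ x y : A, x ⊓ y = mul (rimp x y) x
  inf_eq_limp : ∀ x y : A, x ⊓ y = mul x (limp x y)
  sup_rimp_eq_top : ∀ x y : A, rimp x y ⊔ rimp y x = ⊤
  sup_limp_eq_top : ∀ x y : A, limp x y ⊔ limp y x = ⊤

open PseudoBL

def PseudoBL.IsFilter {A : Type u} [PseudoBL A] (I : Set A) : Prop :=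
  I.Nonempty ∧ (∀ x ∈ I, ∀ y ∈ I, mul x y ∈ I) ∧ ∀ x ∈ I, ∀ y : A, x ≤ y → y ∈ I

def PseudoBL.IsImplicativeFilter {A : Type u} [PseudoBL A] (I : Set A) : Prop :=
  PseudoBL.IsFilter I ∧ ∀ x y : A,
    (limp (rimp x y) x ∈ I → x ∈ I) ∧ (rimp (limp x y) x ∈ I → x ∈ I)

/-- Interval numbers `[a⊥, a⊤]` with `0 ≤ a⊥ ≤ a⊤ ≤ 1`. -/
structure IV where
  lo : ℝ
  hi : ℝ
  lo_nonneg : 0 ≤ lo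
  lo_le_hi : lo ≤ hi
  hi_le_one : hi ≤ 1

namespace IV

instance : LE IV := ⟨fun a b => a.lo ≤ b.lo ∧ a.hi ≤ b.hi⟩
instance : LT IV := ⟨fun a b => a ≤ b ∧ a ≠ b⟩

def rmin (a b : IV) : IV :=
  ⟨min a.lo b.lo, min a.hi b.hi, le_min a.lo_nonneg b.lo_nonneg,
    min_le_min a.lo_le_hi b.lo_le_hi, (min_le_left _ _).trans a.hi_le_one⟩

def rmax (a b : IV) : IV :=
  ⟨max a.lo b.lo, max a.hi b.hi, a.lo_nonneg.trans (le_max_left _ _),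
    max_le_max a.lo_le_hi b.lo_le_hi, max_le a.hi_le_one b.hi_le_one⟩

def mk' (a b : ℝ) (h0 : 0 ≤ a) (h : a ≤ b) (h1 : b ≤ 1) : IV := ⟨a, b, h0, h, h1⟩

def zero : IV := ⟨0, 0, le_refl 0, le_refl 0, zero_le_one⟩

def one : IV := ⟨1, 1, zero_le_one, le_refl 1, le_refl 1⟩

def half : IV := ⟨1/2, 1/2, by norm_num, le_refl _, by norm_num⟩

end IV

open IV

/-- The level subset `F_t = {x : μ_F(x) ≥ t}`. -/
def lvl {A : Type u} [PseudoBL A] (F : A → IV) (t : IV) : Set A := {x | t ≤ F x}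

/-- `(F5)`–`(F6)`: interval valued `(∈,∈∨q)`-fuzzy filter. -/
def InqFilter {A : Type u} [PseudoBL A] (F : A → IV) : Prop :=
  (∀ x y : A, rmin (F x) (rmin (F y) half) ≤ F (mul x y)) ∧
  ∀ x y : A, x ≤ y → rmin (F x) half ≤ F y

/-- `(F13)`. -/
def InqImplicative {A : Type u} [PseudoBL A] (F : A → IV) : Prop :=
  InqFilter F ∧ ∀ x y : A,
    rmin (F (limp (rimp x y) x)) half ≤ F x ∧
    rmin (F (rimp (limp x y) x)) half ≤ F x

/-- `(F16)`: interval valued `(∈,∈∨q)`-fuzzy MV-filter. -/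
def InqMV {A : Type u} [PseudoBL A] (F : A → IV) : Prop :=
  InqFilter F ∧ ∀ x y : A,
    rmin (F (rimp x y)) half ≤ F (rimp (limp (rimp y x) x) y) ∧
    rmin (F (limp x y)) half ≤ F (limp (rimp (limp y x) x) y)

/-- `(F17)`: interval valued `(∈,∈∨q)`-fuzzy G-filter. -/
def InqG {A : Type u} [PseudoBL A] (F : A → IV) : Prop :=
  InqFilter F ∧ ∀ x y : A,
    rmin (F (rimp x (rimp x y))) half ≤ F (rimp x y) ∧
    rmin (F (limp x (limp x y))) half ≤ F (limp x y)

/-- Interval valued fuzzy implicative filter with thresholds `(α, β)`. -/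
def ThresholdImplicative {A : Type u} [PseudoBL A] (F : A → IV) (α β : IV) : Prop :=
  (∀ x y : A, rmin (F x) (rmin (F y) β) ≤ rmax (F (mul x y)) α) ∧
  (∀ x y : A, x ≤ y → rmin (F x) β ≤ rmax (F y) α) ∧
  (∀ x y : A, rmin (F (limp (rimp x y) x)) β ≤ rmax (F x) α) ∧
  (∀ x y : A, rmin (F (rimp (limp x y) x)) β ≤ rmax (F x) α)


section Helpers

open PseudoBL

variable {A : Type u} [PseudoBL A]

lemma pmul_mono_left {a b : A} (c : A) (h : a ≤ b) : mul a c ≤ mul b c :=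
  (res_rimp a c (mul b c)).mpr (h.trans ((res_rimp b c (mul b c)).mp le_rfl))

lemma pmul_mono_right {a b : A} (c : A) (h : a ≤ b) : mul c a ≤ mul c b :=
  (res_limp c a (mul c b)).mpr (h.trans ((res_limp c b (mul c b)).mp le_rfl))

lemma pmul_le_left (a b : A) : mul a b ≤ a := by
  have h := pmul_mono_right (a := b) (b := (⊤ : A)) a le_top
  rw [mul_top] at h; exact h

lemma pmul_le_right (a b : A) : mul a b ≤ b := by
  have h := pmul_mono_left (a := a) (b := (⊤ : A)) b le_top
  rw [top_mul] at h; exact h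

lemma rimp_mul_le (a b : A) : mul (rimp a b) a ≤ b := (res_rimp _ _ _).mpr le_rfl

lemma mul_limp_le (a b : A) : mul a (limp a b) ≤ b := (res_limp _ _ _).mpr le_rfl

lemma le_rimp (a b : A) : b ≤ rimp a b := (res_rimp _ _ _).mp (pmul_le_left b a)

lemma le_limp (a b : A) : b ≤ limp a b := (res_limp _ _ _).mp (pmul_le_right a b)

lemma rimp_mono (a : A) {b b' : A} (h : b ≤ b') : rimp a b ≤ rimp a b' :=
  (res_rimp _ _ _).mp ((rimp_mul_le a b).trans h)

lemma limp_mono (a : A) {b b' : A} (h : b ≤ b') : limp a b ≤ limp a b' :=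
  (res_limp _ _ _).mp ((mul_limp_le a b).trans h)

lemma rimp_anti {a a' : A} (b : A) (h : a ≤ a') : rimp a' b ≤ rimp a b :=
  (res_rimp _ _ _).mp ((pmul_mono_right _ h).trans (rimp_mul_le a' b))

lemma limp_anti {a a' : A} (b : A) (h : a ≤ a') : limp a' b ≤ limp a b :=
  (res_limp _ _ _).mp ((pmul_mono_left _ h).trans (mul_limp_le a' b))

/-- Pointwise key inequality, right version:
`(x → y) ⊙ (y ⊔ ¬y) ≤ ((y → x) ↪ x) → y`. -/
lemma keyA (x y : A) :
    mul (rimp x y) (y ⊔ rimp y ⊥) ≤ rimp (limp (rimp y x) x) y := by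
  apply (res_limp _ _ _).mpr
  apply sup_le
  · exact (res_limp _ _ _).mp ((pmul_le_right _ _).trans (le_rimp _ _))
  · apply (res_limp _ _ _).mp
    apply (res_rimp _ _ _).mp
    rw [PseudoBL.mul_assoc]
    calc mul (rimp x y) (mul (rimp y ⊥) (limp (rimp y x) x))
        ≤ mul (rimp x y) x := pmul_mono_right _
          ((pmul_mono_left _ (rimp_mono y bot_le)).trans (mul_limp_le _ _))
      _ ≤ y := rimp_mul_le x y

/-- Pointwise key inequality, left version. -/
lemma keyA' (x y : A) :
    mul (y ⊔ limp y ⊥) (limp x y) ≤ limp (rimp (limp y x) x) y := by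
  apply (res_rimp _ _ _).mpr
  apply sup_le
  · exact (res_rimp _ _ _).mp ((pmul_le_left _ _).trans (le_limp _ _))
  · apply (res_rimp _ _ _).mp
    apply (res_limp _ _ _).mp
    rw [← PseudoBL.mul_assoc]
    calc mul (mul (rimp (limp y x) x) (limp y ⊥)) (limp x y)
        ≤ mul x (limp x y) := pmul_mono_left _
          ((pmul_mono_right _ (limp_mono y bot_le)).trans (rimp_mul_le _ _))
      _ ≤ y := mul_limp_le x y

lemma keyB (y : A) :
    limp (rimp (y ⊔ rimp y ⊥) ⊥) (y ⊔ rimp y ⊥) = (⊤ : A) := by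
  apply le_antisymm le_top
  apply (res_limp _ _ _).mp
  rw [mul_top]
  exact (rimp_anti ⊥ le_sup_left).trans le_sup_right

lemma keyB' (y : A) :
    rimp (limp (y ⊔ limp y ⊥) ⊥) (y ⊔ limp y ⊥) = (⊤ : A) := by
  apply le_antisymm le_top
  apply (res_rimp _ _ _).mp
  rw [top_mul]
  exact (limp_anti ⊥ le_sup_left).trans le_sup_right

lemma real_chain {fd fe fde ft ftop h : ℝ} (htop : min fd h ≤ ftop)
    (he : min ftop h ≤ fe) (hde : min fd (min fe h) ≤ fde)
    (ht : min fde h ≤ ft) : min fd h ≤ ft := by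
  have h1 : min fd h ≤ fe := le_trans (le_min htop (min_le_right fd h)) he
  have h2 : min fd h ≤ fde :=
    le_trans (le_min (min_le_left fd h) (le_min h1 (min_le_right fd h))) hde
  exact le_trans (le_min h2 (min_le_right fd h)) ht

lemma IV.le_def {a b : IV} : a ≤ b ↔ a.lo ≤ b.lo ∧ a.hi ≤ b.hi := Iff.rfl

end Helpers

theorem stmt16 {A : Type u} [PseudoBL A] (F : A → IV)
    (hF : InqImplicative F) : InqMV F := by
  obtain ⟨⟨h1, h2⟩, h3⟩ := hF
  refine ⟨⟨h1, h2⟩, fun x y => ?_⟩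
  constructor
  · -- right version
    have hA := keyA x y
    have hetop := (h3 (y ⊔ rimp y ⊥) ⊥).1
    rw [keyB y] at hetop
    have htopF := h2 (rimp x y) ⊤ le_top
    have hde := h1 (rimp x y) (y ⊔ rimp y ⊥)
    have ht := h2 _ _ hA
    exact IV.le_def.mpr
      ⟨real_chain (IV.le_def.mp htopF).1 (IV.le_def.mp hetop).1
        (IV.le_def.mp hde).1 (IV.le_def.mp ht).1,
       real_chain (IV.le_def.mp htopF).2 (IV.le_def.mp hetop).2
        (IV.le_def.mp hde).2 (IV.le_def.mp ht).2⟩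
  · -- left version
    have hA := keyA' x y
    have hetop := (h3 (y ⊔ limp y ⊥) ⊥).2
    rw [keyB' y] at hetop
    have htopF := h2 (limp x y) ⊤ le_top
    have hde := h1 (y ⊔ limp y ⊥) (limp x y)
    have ht := h2 _ _ hA
    have hde1 : min (F (limp x y)).lo (min (F (y ⊔ limp y ⊥)).lo (IV.half).lo)
        ≤ (F (mul (y ⊔ limp y ⊥) (limp x y))).lo := by
      rw [min_left_comm]; exact (IV.le_def.mp hde).1
    have hde2 : min (F (limp x y)).hi (min (F (y ⊔ limp y ⊥)).hi (IV.half).hi)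
        ≤ (F (mul (y ⊔ limp y ⊥) (limp x y))).hi := by
      rw [min_left_comm]; exact (IV.le_def.mp hde).2
    exact IV.le_def.mpr
      ⟨real_chain (IV.le_def.mp htopF).1 (IV.le_def.mp hetop).1
        hde1 (IV.le_def.mp ht).1,
       real_chain (IV.le_def.mp htopF).2 (IV.le_def.mp hetop).2
        hde2 (IV.le_def.mp ht).2⟩
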